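/- arXiv:0912.3989 — 2 statements merged into one kernel-verified Lean document; each statement's English description precedes it below -/
import Mathlib

section
/- Let Ω be an N×N real diagonal matrix with positive diagonal entries and let G be a simple graph on {1,…,N}. Let S be the set of N×N real matrices that are Ω-antisymmetric, null-row, and supported on adjacent pairs of G. Let A : ℝ → Matrix (N×N, ℝ) with A(t) ∈ S for all t, let A♭ : ℝ → Matrix (N×N, ℝ) be a differentiable curve of antisymmetric matrices, let p : ℝ → ℝᴺ, and let Γ : ℝ → Matrix (N×N, ℝ) be a differentiable curve with Γ(t) ∈ S for all t (a discrete closed curve advected by the flow). Suppose that for every t: (i) for every pair of adjacent vertices i, j, (dA♭/dt(t) + [A(t), A♭(t)Ω]Ω⁻¹)_{ij} + (p(t)_j − p(t)_i) = 0 (the discrete Euler equations), and (ii) Tr(Ω·(dΓ/dt(t) + [A(t), Γ(t)])·A♭(t)ᵀ) = 0 (the discrete advection of Γ tested against A♭). Then the discrete circulation C(t) = Tr(Ω Γ(t) A♭(t)ᵀ) is constant in t: dC/dt = 0. -/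
open Matrix

/-!
With `Ω = diagonal d` and `A♭ = F`: differentiating `C = Tr(Ω Γ A♭ᵀ)` gives `Tr(Ω Γ̇ A♭ᵀ) + Tr(Ω Γ Ȧ♭ᵀ)`. The advection hypothesis
turns the first term into `-Tr(Ω [A, Γ] A♭ᵀ)`. In the second, `Γ` lives on edges, where the
Euler equation gives `Ȧ♭ = -[A, A♭ Ω] Ω⁻¹ - ∇p`. The pressure gradient pairs to zero with `Γ`
because `Ω Γ` is antisymmetric with zero row sums, and by the `Ω`-antisymmetry of `Γ`, the
antisymmetry of `A♭` and cyclicity of the trace, the commutator term equals `Tr(Ω [A, Γ] A♭ᵀ)`.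
-/

def discreteGradient {n R : Type*} [Sub R] (p : n → R) : Matrix n n R :=
  of fun i j => p j - p i

namespace Matrix

variable {n R : Type*} [Fintype n]

theorem trace_diagonal_mul_mul_transpose [DecidableEq n] [CommSemiring R] (d : n → R)
    (X Y : Matrix n n R) :
    trace (diagonal d * X * Yᵀ) = ∑ i, ∑ j, d i * X i j * Y i j := by
  simp only [trace, diag, mul_apply, diagonal_apply, transpose_apply, ite_mul, zero_mul,
    Finset.sum_ite_eq, Finset.mem_univ, if_true]

theorem trace_diagonal_mul_mul_transpose_eq_zero_of_disjoint_support [DecidableEq n]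
    [CommSemiring R] (d : n → R) {X Y : Matrix n n R} (r : n → n → Prop)
    (hX : ∀ i j, ¬r i j → X i j = 0) (hY : ∀ i j, r i j → Y i j = 0) :
    trace (diagonal d * X * Yᵀ) = 0 := by
  rw [trace_diagonal_mul_mul_transpose]
  refine Finset.sum_eq_zero fun i _ => Finset.sum_eq_zero fun j _ => ?_
  by_cases h : r i j
  · rw [hY i j h, mul_zero]
  · rw [hX i j h, mul_zero, zero_mul]

theorem hasDerivAt_trace_diagonal_mul_mul_transpose {𝕜 : Type*} [NontriviallyNormedField 𝕜]
    [DecidableEq n] (d : n → 𝕜) {X Y : 𝕜 → Matrix n n 𝕜} {X' Y' : Matrix n n 𝕜} {t : 𝕜}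
    (hX : ∀ i j, HasDerivAt (fun s => X s i j) (X' i j) t)
    (hY : ∀ i j, HasDerivAt (fun s => Y s i j) (Y' i j) t) :
    HasDerivAt (fun s => trace (diagonal d * X s * (Y s)ᵀ))
      (trace (diagonal d * X' * (Y t)ᵀ) + trace (diagonal d * X t * Y'ᵀ)) t := by
  simp only [trace_diagonal_mul_mul_transpose, ← Finset.sum_add_distrib]
  refine HasDerivAt.fun_sum fun i _ => HasDerivAt.fun_sum fun j _ => ?_
  exact ((hX i j).const_mul (d i)).mul (hY i j)

theorem trace_mul_transpose_discreteGradient_eq_zero [CommRing R] {M : Matrix n n R}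
    (hrow : M *ᵥ 1 = 0) (hcol : 1 ᵥ* M = 0) (p : n → R) :
    trace (M * (discreteGradient p)ᵀ) = 0 := by
  have hrow' : ∀ i, ∑ j, M i j = 0 := fun i => by
    simpa [mulVec, dotProduct] using congrFun hrow i
  have hcol' : ∀ j, ∑ i, M i j = 0 := fun j => by
    simpa [vecMul, dotProduct] using congrFun hcol j
  simp only [discreteGradient, trace, diag, mul_apply, transpose_apply, of_apply, mul_sub,
    Finset.sum_sub_distrib]
  rw [Finset.sum_comm]
  simp [← Finset.sum_mul, hrow', hcol']

/-- `D Γ` is null-row, and by its antisymmetry also null-column. -/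
theorem trace_mul_mul_transpose_discreteGradient_eq_zero [CommRing R] {D Γ : Matrix n n R}
    (hD : Dᵀ = D) (hΓ : Γᵀ * D + D * Γ = 0) (hrow : Γ *ᵥ 1 = 0) (p : n → R) :
    trace (D * Γ * (discreteGradient p)ᵀ) = 0 := by
  have hrow' : (D * Γ) *ᵥ 1 = 0 := by rw [← mulVec_mulVec, hrow, mulVec_zero]
  refine trace_mul_transpose_discreteGradient_eq_zero hrow' ?_ p
  rw [← mulVec_transpose, transpose_mul, hD, eq_neg_of_add_eq_zero_left hΓ, neg_mulVec, hrow',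
    neg_zero]

theorem trace_mul_mul_transpose_mul_inv [DecidableEq n] [CommRing R] {D Γ : Matrix n n R}
    (hD : Dᵀ = D) (hDu : IsUnit D.det) (hΓ : Γᵀ * D + D * Γ = 0) (K : Matrix n n R) :
    trace (D * Γ * (K * D⁻¹)ᵀ) = -trace (Γ * K) := by
  rw [transpose_mul, transpose_nonsing_inv, hD, eq_neg_of_add_eq_zero_right hΓ, Matrix.neg_mul,
    Matrix.mul_assoc, mul_nonsing_inv_cancel_left _ _ hDu, trace_neg, ← transpose_mul,
    trace_transpose, trace_mul_comm]

theorem trace_mul_commutator_mul_transpose [CommRing R] {F : Matrix n n R} (hF : Fᵀ = -F)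
    (D A Γ : Matrix n n R) :
    trace (D * (A * Γ - Γ * A) * Fᵀ) = trace (Γ * (A * (F * D) - F * D * A)) := by
  have h₁ : trace (Γ * (A * (F * D))) = trace (D * (Γ * A) * F) := by
    rw [show Γ * (A * (F * D)) = Γ * A * F * D by simp only [Matrix.mul_assoc], trace_mul_comm]
    simp only [Matrix.mul_assoc]
  have h₂ : trace (Γ * (F * D * A)) = trace (D * (A * Γ) * F) := by
    rw [trace_mul_comm Γ, trace_mul_comm (D * (A * Γ)) F]
    simp only [Matrix.mul_assoc]
  rw [hF, Matrix.mul_neg, Matrix.mul_sub, Matrix.mul_sub, Matrix.sub_mul, trace_neg, trace_sub,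
    trace_sub, h₁, h₂, neg_sub]

end Matrix

theorem discrete_kelvin_general (N : ℕ) (d : Fin N → ℝ) (hd : ∀ i, 0 < d i)
    (G : SimpleGraph (Fin N))
    (A : ℝ → Matrix (Fin N) (Fin N) ℝ)
    (F F' : ℝ → Matrix (Fin N) (Fin N) ℝ)
    (hFanti : ∀ t, (F t)ᵀ = -(F t))
    (hFderiv : ∀ t i j, HasDerivAt (fun s => F s i j) (F' t i j) t)
    (p : ℝ → Fin N → ℝ)
    (Γ Γ' : ℝ → Matrix (Fin N) (Fin N) ℝ)
    (hΓS : ∀ t, (Γ t)ᵀ * Matrix.diagonal d + Matrix.diagonal d * Γ t = 0 ∧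
      Γ t *ᵥ (1 : Fin N → ℝ) = 0 ∧ ∀ i j, ¬G.Adj i j → Γ t i j = 0)
    (hΓderiv : ∀ t i j, HasDerivAt (fun s => Γ s i j) (Γ' t i j) t)
    (hEuler : ∀ t, ∀ i j, G.Adj i j →
      (F' t + (A t * (F t * Matrix.diagonal d) - (F t * Matrix.diagonal d) * A t)
          * (Matrix.diagonal d)⁻¹) i j
        + (p t j - p t i) = 0)
    (hAdvect : ∀ t,
      Matrix.trace (Matrix.diagonal d
        * (Γ' t + (A t * Γ t - Γ t * A t)) * (F t)ᵀ) = 0) :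
    ∀ t, HasDerivAt
      (fun s => Matrix.trace (Matrix.diagonal d * Γ s * (F s)ᵀ)) 0 t := by
  intro t
  obtain ⟨hΓanti, hΓrow, hΓsupp⟩ := hΓS t
  have hdet : IsUnit (diagonal d).det := by
    rw [det_diagonal]
    exact (Finset.prod_ne_zero_iff.2 fun i _ => (hd i).ne').isUnit
  set K := A t * (F t * diagonal d) - F t * diagonal d * A t
  have hEuler' : trace (diagonal d * Γ t *
      (F' t + K * (diagonal d)⁻¹ + discreteGradient (p t))ᵀ) = 0 :=
    trace_diagonal_mul_mul_transpose_eq_zero_of_disjoint_support d G.Adj hΓsupp (hEuler t)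
  have hpressure := trace_mul_mul_transpose_discreteGradient_eq_zero (diagonal_transpose d)
    hΓanti hΓrow (p t)
  have hK := trace_mul_mul_transpose_mul_inv (diagonal_transpose d) hdet hΓanti K
  have hcomm := trace_mul_commutator_mul_transpose (hFanti t) (diagonal d) (A t) (Γ t)
  have hadv := hAdvect t
  rw [Matrix.mul_add, Matrix.add_mul, trace_add] at hadv
  rw [transpose_add, transpose_add, Matrix.mul_add, Matrix.mul_add, trace_add, trace_add]
    at hEuler'
  refine (hasDerivAt_trace_diagonal_mul_mul_transpose d (hΓderiv t) (hFderiv t)).congr_deriv ?_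
  linarith

/-- **Discrete Kelvin circulation theorem.** Let `A(t) ∈ S` be a discrete velocity with
antisymmetric flat `A♭(t)` satisfying the discrete Euler equations with pressure `p(t)`
on the edges of the adjacency graph `G`, and let `Γ(t) ∈ S` be a discrete closed curve
advected by the flow in the weak sense `Tr(Ω(Γ̇ + [A,Γ])(A♭)ᵀ) = 0`. Then the discrete
circulation `C(t) = Tr(Ω Γ(t) (A♭(t))ᵀ)` is constant in time. -/
theorem discrete_kelvin (N : ℕ) (d : Fin N → ℝ) (hd : ∀ i, 0 < d i)
    (G : SimpleGraph (Fin N))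
    (A : ℝ → Matrix (Fin N) (Fin N) ℝ)
    (hAS : ∀ t, (A t)ᵀ * Matrix.diagonal d + Matrix.diagonal d * A t = 0 ∧
      A t *ᵥ (1 : Fin N → ℝ) = 0 ∧ ∀ i j, ¬G.Adj i j → A t i j = 0)
    (F F' : ℝ → Matrix (Fin N) (Fin N) ℝ)
    (hFanti : ∀ t, (F t)ᵀ = -(F t))
    (hFderiv : ∀ t i j, HasDerivAt (fun s => F s i j) (F' t i j) t)
    (p : ℝ → Fin N → ℝ)
    (Γ Γ' : ℝ → Matrix (Fin N) (Fin N) ℝ)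
    (hΓS : ∀ t, (Γ t)ᵀ * Matrix.diagonal d + Matrix.diagonal d * Γ t = 0 ∧
      Γ t *ᵥ (1 : Fin N → ℝ) = 0 ∧ ∀ i j, ¬G.Adj i j → Γ t i j = 0)
    (hΓderiv : ∀ t i j, HasDerivAt (fun s => Γ s i j) (Γ' t i j) t)
    (hEuler : ∀ t, ∀ i j, G.Adj i j →
      (F' t + (A t * (F t * Matrix.diagonal d) - (F t * Matrix.diagonal d) * A t)
          * (Matrix.diagonal d)⁻¹) i j
        + (p t j - p t i) = 0)
    (hAdvect : ∀ t,
      Matrix.trace (Matrix.diagonal d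
        * (Γ' t + (A t * Γ t - Γ t * A t)) * (F t)ᵀ) = 0) :
    ∀ t, HasDerivAt
      (fun s => Matrix.trace (Matrix.diagonal d * Γ s * (F s)ᵀ)) 0 t :=
  discrete_kelvin_general N d hd G A F F' hFanti hFderiv p Γ Γ' hΓS hΓderiv hEuler hAdvect
end

section
/- Let Ω be an N×N real diagonal matrix with positive diagonal entries and let G be a connected simple graph on {1,…,N}. Let S be the set of N×N real matrices that are Ω-antisymmetric, null-row, and supported on adjacent pairs of G. Let A₁, A₂ ∈ S (the discrete velocities at two consecutive time steps), let F₁, F₂ be antisymmetric N×N real matrices (their discrete flats), let τ > 0 be the time step, and set Ḟ = (F₂ − F₁)/τ. Suppose that for every B ∈ S: Tr((Ḟ·Ω + A₁F₁Ω − F₂ΩA₂)·B) = 0. Then there exists a discrete pressure p ∈ ℝᴺ such that for every pair of adjacent vertices i, j: (Ḟ + ½([A₁, F₁Ω]Ω⁻¹ + [A₂, F₂Ω]Ω⁻¹))_{ij} + (p_j − p_i) = 0. -/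
open Matrix
open scoped RealInnerProductSpace

/-!
Write `Ḟ = (F₂ - F₁)/τ` and `K = Ḟ + A₁F₁ - (A₂F₂)ᵀ`. Since `Aₖ` is Ω-antisymmetric and `Fₖ`
is antisymmetric, `(AₖFₖ)ᵀΩ = FₖΩAₖ`; hence the Euler–Lagrange matrix is `KΩ`, and the
left-hand side of the Euler equation is the antisymmetric matrix `E = (K - Kᵀ)/2`. For every
antisymmetric, null-row `W` supported on `G`, the matrix `B = Ω⁻¹W` lies in `S`, so
`tr(EW) = tr(KW) = tr(KΩB) = 0`. These `W` are the divergence-free edge flows, i.e. the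
orthogonal complement of the edge gradients, so `E` is an edge gradient `p i - p j`.
-/

section OmegaAntisymmetric

variable {n R : Type*} [Fintype n] [CommRing R] {Ω A F W : Matrix n n R}

theorem transpose_mul_mul_eq_of_omega_antisymm (hA : Aᵀ * Ω + Ω * A = 0) (hF : Fᵀ = -F) :
    (A * F)ᵀ * Ω = F * Ω * A := by
  rw [transpose_mul, hF, Matrix.mul_assoc, eq_neg_of_add_eq_zero_left hA, Matrix.neg_mul,
    Matrix.mul_neg, neg_neg, Matrix.mul_assoc]

theorem trace_sub_transpose_mul_of_transpose_eq_neg (K : Matrix n n R) (hW : Wᵀ = -W) :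
    trace ((K - Kᵀ) * W) = 2 * trace (K * W) := by
  rw [Matrix.sub_mul, trace_sub, ← trace_transpose_mul K, hW, Matrix.mul_neg, trace_neg]
  ring

variable [DecidableEq n]

theorem commutator_mul_inv_eq_of_omega_antisymm (hΩ : IsUnit Ω.det)
    (hA : Aᵀ * Ω + Ω * A = 0) (hF : Fᵀ = -F) :
    (A * (F * Ω) - F * Ω * A) * Ω⁻¹ = A * F - (A * F)ᵀ := by
  rw [← transpose_mul_mul_eq_of_omega_antisymm hA hF, Matrix.sub_mul, Matrix.mul_assoc,
    Matrix.mul_assoc, Matrix.mul_assoc, mul_nonsing_inv _ hΩ, Matrix.mul_one, Matrix.mul_one]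

theorem omega_antisymm_inv_mul (hΩ : Ωᵀ = Ω) (hdet : IsUnit Ω.det) (hW : Wᵀ = -W) :
    (Ω⁻¹ * W)ᵀ * Ω + Ω * (Ω⁻¹ * W) = 0 := by
  rw [transpose_mul, transpose_nonsing_inv, hΩ, hW, Matrix.neg_mul, Matrix.neg_mul,
    Matrix.mul_assoc, nonsing_inv_mul _ hdet, ← Matrix.mul_assoc, mul_nonsing_inv _ hdet,
    Matrix.mul_one, Matrix.one_mul, neg_add_cancel]

end OmegaAntisymmetric

namespace SimpleGraph

variable {V : Type*} (G : SimpleGraph V) [DecidableRel G.Adj]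

def antisymmFlow (v : EuclideanSpace ℝ (V × V)) : Matrix V V ℝ :=
  of fun i j => if G.Adj i j then v (i, j) - v (j, i) else 0

theorem transpose_antisymmFlow (v : EuclideanSpace ℝ (V × V)) :
    (G.antisymmFlow v)ᵀ = -G.antisymmFlow v := by
  ext i j
  simp only [antisymmFlow, transpose_apply, Matrix.neg_apply, of_apply, G.adj_comm j i]
  split_ifs <;> ring

theorem antisymmFlow_of_not_adj (v : EuclideanSpace ℝ (V × V)) {i j : V} (h : ¬G.Adj i j) :
    G.antisymmFlow v i j = 0 := by
  simp [antisymmFlow, h]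

variable [Fintype V]

noncomputable def edgeGradient : (V → ℝ) →ₗ[ℝ] EuclideanSpace ℝ (V × V) where
  toFun p := WithLp.toLp 2 fun e => if G.Adj e.1 e.2 then p e.1 - p e.2 else 0
  map_add' p q := by
    ext e
    simp only [PiLp.add_apply, Pi.add_apply]
    split_ifs <;> ring
  map_smul' c p := by
    ext e
    simp only [PiLp.smul_apply, Pi.smul_apply, smul_eq_mul, RingHom.id_apply]
    split_ifs <;> ring

noncomputable def edgeRestrict (E : Matrix V V ℝ) : EuclideanSpace ℝ (V × V) :=
  WithLp.toLp 2 fun e => if G.Adj e.1 e.2 then E e.1 e.2 else 0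

theorem inner_edgeGradient (p : V → ℝ) (v : EuclideanSpace ℝ (V × V)) :
    ⟪G.edgeGradient p, v⟫ = p ⬝ᵥ (G.antisymmFlow v *ᵥ 1) := by
  have hswap : ∑ i, ∑ j, (if G.Adj i j then v (i, j) * p j else 0) =
      ∑ i, ∑ j, (if G.Adj i j then p i * v (j, i) else 0) := by
    rw [Finset.sum_comm]
    simp only [G.adj_comm, mul_comm]
  have hsplit : ∀ i j, v (i, j) * (if G.Adj i j then p i - p j else 0) =
      (if G.Adj i j then p i * v (i, j) else 0) -
        (if G.Adj i j then v (i, j) * p j else 0) := by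
    intro i j
    split_ifs <;> ring
  rw [EuclideanSpace.inner_eq_star_dotProduct, star_trivial]
  simp only [dotProduct, mulVec, edgeGradient, antisymmFlow, LinearMap.coe_mk, AddHom.coe_mk,
    of_apply, Pi.one_apply, mul_one, Fintype.sum_prod_type, hsplit, Finset.sum_sub_distrib]
  rw [hswap, ← Finset.sum_sub_distrib]
  simp only [Finset.mul_sum, mul_ite, mul_sub, mul_zero, ← Finset.sum_sub_distrib, ite_sub_ite,
    sub_zero]

theorem trace_mul_antisymmFlow {E : Matrix V V ℝ} (hE : Eᵀ = -E)
    (v : EuclideanSpace ℝ (V × V)) :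
    trace (E * G.antisymmFlow v) = -2 * ⟪G.edgeRestrict E, v⟫ := by
  have hE' : ∀ i j, E j i = -E i j := fun i j => by simpa using congrFun (congrFun hE i) j
  have hswap : ∑ i, ∑ j, (if G.Adj j i then E i j * v (j, i) else 0) =
      -∑ i, ∑ j, (if G.Adj i j then v (i, j) * E i j else 0) := by
    rw [Finset.sum_comm, ← Finset.sum_neg_distrib]
    refine Finset.sum_congr rfl fun i _ => ?_
    rw [← Finset.sum_neg_distrib]
    refine Finset.sum_congr rfl fun j _ => ?_
    rw [hE' i j]
    split_ifs <;> ring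
  have hsplit : ∀ i j, E i j * (if G.Adj j i then v (j, i) - v (i, j) else 0) =
      (if G.Adj j i then E i j * v (j, i) else 0) -
        (if G.Adj i j then v (i, j) * E i j else 0) := by
    intro i j
    simp only [G.adj_comm j i]
    split_ifs <;> ring
  rw [EuclideanSpace.inner_eq_star_dotProduct, star_trivial]
  simp only [trace, diag, mul_apply, dotProduct, edgeRestrict, antisymmFlow, of_apply,
    Fintype.sum_prod_type, hsplit, Finset.sum_sub_distrib, hswap, mul_ite, mul_zero]
  ring

theorem exists_potential_of_forall_trace_mul_eq_zero {E : Matrix V V ℝ} (hE : Eᵀ = -E)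
    (h : ∀ W : Matrix V V ℝ, Wᵀ = -W → W *ᵥ 1 = 0 → (∀ i j, ¬G.Adj i j → W i j = 0) →
      trace (E * W) = 0) :
    ∃ p : V → ℝ, ∀ i j, G.Adj i j → E i j = p i - p j := by
  have hrange : G.edgeRestrict E ∈ LinearMap.range G.edgeGradient := by
    rw [← Submodule.orthogonal_orthogonal (LinearMap.range _), Submodule.mem_orthogonal]
    intro v hv
    have hdiv : G.antisymmFlow v *ᵥ 1 = 0 := by
      rw [← dotProduct_self_eq_zero, ← inner_edgeGradient]
      exact (Submodule.mem_orthogonal _ _).1 hv _ ⟨_, rfl⟩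
    have htrace := h _ (G.transpose_antisymmFlow v) hdiv fun i j => G.antisymmFlow_of_not_adj v
    rw [G.trace_mul_antisymmFlow hE, real_inner_comm] at htrace
    linarith
  obtain ⟨p, hp⟩ := hrange
  refine ⟨p, fun i j hij => ?_⟩
  simpa [edgeGradient, edgeRestrict, hij] using (congrArg (· (i, j)) hp).symm

end SimpleGraph

theorem trace_mul_eq_zero_of_forall_omega_antisymm {V : Type*} [Fintype V] [DecidableEq V]
    (G : SimpleGraph V) {d : V → ℝ} (hd : IsUnit (diagonal d).det) {K W : Matrix V V ℝ}
    (hK : ∀ B : Matrix V V ℝ, Bᵀ * diagonal d + diagonal d * B = 0 → B *ᵥ 1 = 0 →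
      (∀ i j, ¬G.Adj i j → B i j = 0) → trace (K * diagonal d * B) = 0)
    (hW : Wᵀ = -W) (hW1 : W *ᵥ 1 = 0) (hWG : ∀ i j, ¬G.Adj i j → W i j = 0) :
    trace (K * W) = 0 := by
  have hB := hK ((diagonal d)⁻¹ * W) (omega_antisymm_inv_mul (diagonal_transpose d) hd hW)
    (by rw [← mulVec_mulVec, hW1, mulVec_zero])
    (fun i j hij => by simp [inv_diagonal, hWG i j hij])
  rwa [Matrix.mul_assoc, ← Matrix.mul_assoc (diagonal d), mul_nonsing_inv _ hd,
    Matrix.one_mul] at hB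

theorem fully_discrete_euler_equations_general (N : ℕ) (d : Fin N → ℝ) (hd : ∀ i, 0 < d i)
    (G : SimpleGraph (Fin N))
    (A₁ A₂ F₁ F₂ : Matrix (Fin N) (Fin N) ℝ)
    (hA₁S : A₁ᵀ * Matrix.diagonal d + Matrix.diagonal d * A₁ = 0 ∧
      A₁ *ᵥ (1 : Fin N → ℝ) = 0 ∧ ∀ i j, ¬G.Adj i j → A₁ i j = 0)
    (hA₂S : A₂ᵀ * Matrix.diagonal d + Matrix.diagonal d * A₂ = 0 ∧
      A₂ *ᵥ (1 : Fin N → ℝ) = 0 ∧ ∀ i j, ¬G.Adj i j → A₂ i j = 0)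
    (hF₁ : F₁ᵀ = -F₁) (hF₂ : F₂ᵀ = -F₂)
    (τ : ℝ)
    (hEL : ∀ B : Matrix (Fin N) (Fin N) ℝ,
      Bᵀ * Matrix.diagonal d + Matrix.diagonal d * B = 0 →
      B *ᵥ (1 : Fin N → ℝ) = 0 →
      (∀ i j, ¬G.Adj i j → B i j = 0) →
      Matrix.trace ((τ⁻¹ • (F₂ - F₁) * Matrix.diagonal d
          + A₁ * F₁ * Matrix.diagonal d
          - F₂ * Matrix.diagonal d * A₂) * B) = 0) :
    ∃ p : Fin N → ℝ, ∀ i j, G.Adj i j →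
      (τ⁻¹ • (F₂ - F₁)
        + ((1 : ℝ) / 2) •
          ((A₁ * (F₁ * Matrix.diagonal d) - (F₁ * Matrix.diagonal d) * A₁)
              * (Matrix.diagonal d)⁻¹
            + (A₂ * (F₂ * Matrix.diagonal d) - (F₂ * Matrix.diagonal d) * A₂)
              * (Matrix.diagonal d)⁻¹)) i j
        + (p j - p i) = 0 := by
  classical
  set Ω := diagonal d
  have hΩ : IsUnit Ω.det := by
    simpa [Ω, det_diagonal, Finset.prod_ne_zero_iff] using fun i => (hd i).ne'
  set Fdot := τ⁻¹ • (F₂ - F₁)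
  have hFdot : Fdotᵀ = -Fdot := by
    simp only [Fdot, transpose_smul, transpose_sub, hF₁, hF₂]
    module
  set K := Fdot + A₁ * F₁ - (A₂ * F₂)ᵀ
  have hM : Fdot * Ω + A₁ * F₁ * Ω - F₂ * Ω * A₂ = K * Ω := by
    rw [← transpose_mul_mul_eq_of_omega_antisymm hA₂S.1 hF₂, Matrix.sub_mul, Matrix.add_mul]
  set E := ((1 : ℝ) / 2) • (K - Kᵀ) with hEdef
  have hEanti : Eᵀ = -E := by
    rw [hEdef, transpose_smul, transpose_sub, transpose_transpose, ← smul_neg, neg_sub]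
  have hE : Fdot + ((1 : ℝ) / 2) • ((A₁ * (F₁ * Ω) - F₁ * Ω * A₁) * Ω⁻¹
      + (A₂ * (F₂ * Ω) - F₂ * Ω * A₂) * Ω⁻¹) = E := by
    rw [commutator_mul_inv_eq_of_omega_antisymm hΩ hA₁S.1 hF₁,
      commutator_mul_inv_eq_of_omega_antisymm hΩ hA₂S.1 hF₂]
    simp only [E, K, transpose_add, transpose_sub, transpose_transpose, hFdot]
    module
  have htrace : ∀ W : Matrix (Fin N) (Fin N) ℝ, Wᵀ = -W → W *ᵥ 1 = 0 →
      (∀ i j, ¬G.Adj i j → W i j = 0) → trace (E * W) = 0 := fun W hW hW1 hWG => by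
    rw [hEdef, smul_mul, trace_smul, trace_sub_transpose_mul_of_transpose_eq_neg K hW,
      trace_mul_eq_zero_of_forall_omega_antisymm G hΩ (by simpa only [hM] using hEL) hW hW1 hWG,
      mul_zero, smul_zero]
  obtain ⟨p, hp⟩ := G.exists_potential_of_forall_trace_mul_eq_zero hEanti htrace
  exact ⟨p, fun i j hij => by rw [hE, hp i j hij]; ring⟩

/-- **Fully discrete Euler equations (Crank–Nicolson form).** Let `A₁, A₂ ∈ S` be the
discrete velocities at two consecutive time steps with antisymmetric flats `F₁, F₂`,
time step `τ > 0`, and `Ḟ = (F₂ − F₁)/τ`. If the fully discrete Euler–Lagrange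
condition `Tr((ḞΩ + A₁F₁Ω − F₂ΩA₂)B) = 0` holds for all `B ∈ S`, then there exists a
discrete pressure `p` such that on every edge
`(Ḟ + ½([A₁,F₁Ω]Ω⁻¹ + [A₂,F₂Ω]Ω⁻¹))_{ij} + (p_j − p_i) = 0`. -/
theorem fully_discrete_euler_equations (N : ℕ) (d : Fin N → ℝ) (hd : ∀ i, 0 < d i)
    (G : SimpleGraph (Fin N)) (hG : G.Connected)
    (A₁ A₂ F₁ F₂ : Matrix (Fin N) (Fin N) ℝ)
    (hA₁S : A₁ᵀ * Matrix.diagonal d + Matrix.diagonal d * A₁ = 0 ∧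
      A₁ *ᵥ (1 : Fin N → ℝ) = 0 ∧ ∀ i j, ¬G.Adj i j → A₁ i j = 0)
    (hA₂S : A₂ᵀ * Matrix.diagonal d + Matrix.diagonal d * A₂ = 0 ∧
      A₂ *ᵥ (1 : Fin N → ℝ) = 0 ∧ ∀ i j, ¬G.Adj i j → A₂ i j = 0)
    (hF₁ : F₁ᵀ = -F₁) (hF₂ : F₂ᵀ = -F₂)
    (τ : ℝ) (hτ : 0 < τ)
    (hEL : ∀ B : Matrix (Fin N) (Fin N) ℝ,
      Bᵀ * Matrix.diagonal d + Matrix.diagonal d * B = 0 →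
      B *ᵥ (1 : Fin N → ℝ) = 0 →
      (∀ i j, ¬G.Adj i j → B i j = 0) →
      Matrix.trace ((τ⁻¹ • (F₂ - F₁) * Matrix.diagonal d
          + A₁ * F₁ * Matrix.diagonal d
          - F₂ * Matrix.diagonal d * A₂) * B) = 0) :
    ∃ p : Fin N → ℝ, ∀ i j, G.Adj i j →
      (τ⁻¹ • (F₂ - F₁)
        + ((1 : ℝ) / 2) •
          ((A₁ * (F₁ * Matrix.diagonal d) - (F₁ * Matrix.diagonal d) * A₁)
              * (Matrix.diagonal d)⁻¹
            + (A₂ * (F₂ * Matrix.diagonal d) - (F₂ * Matrix.diagonal d) * A₂)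
              * (Matrix.diagonal d)⁻¹)) i j
        + (p j - p i) = 0 :=
  fully_discrete_euler_equations_general N d hd G A₁ A₂ F₁ F₂ hA₁S hA₂S hF₁ hF₂ τ hEL
end
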